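/- arXiv:math/0602225 — 2 statements merged into one kernel-verified Lean document; each statement's English description precedes it below -/
import Mathlib

section
/- Let g : [a, b] → ℝ be C¹ with g' monotone and |g'(β)| ≥ μ > 0 for all β ∈ [a, b]. Then |∫_a^b e(g(β)) dβ| ≤ 1/(πμ), where e(θ) = exp(2πiθ). -/
open Real intervalIntegral

/-- `e(θ) = exp(2πiθ)`. -/
noncomputable def e (θ : ℝ) : ℂ := Complex.exp (2 * Real.pi * Complex.I * θ)

/-!
Where `g' ≥ μ` (the case `g' ≤ -μ` follows by complex conjugation), write
`e (g t) = (g' t)⁻¹ • (e ∘ g)' t / (2πi)`. The weight `h = 1 / g'` is continuous, monotone or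
antitone, and takes values in `(0, 1/μ]`, while `e ∘ g` has modulus one, so the second-mean-value
bound `‖∫ h F'‖ ≤ sup ‖F‖ · (|h a| + |h b| + |h b - h a|)` gives `(2/μ) / (2π)`. That bound comes
from integrating by parts against the Lebesgue–Stieltjes measure `dh`, which needs no derivative
of `h`.
-/

open MeasureTheory Set ComplexConjugate

namespace StieltjesFunction

variable {E : Type*} [NormedAddCommGroup E] [NormedSpace ℝ E] [CompleteSpace E]
  (S : StieltjesFunction ℝ) {f : ℝ → E} {a b : ℝ}

instance isFiniteMeasure_restrict_Ioc (a b : ℝ) : IsFiniteMeasure (S.measure.restrict (Ioc a b)) :=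
  ⟨by simp [S.measure_Ioc]⟩

lemma measureReal_Ioc (hab : a ≤ b) : S.measure.real (Ioc a b) = S b - S a := by
  rw [measureReal_def, S.measure_Ioc, ENNReal.toReal_ofReal (sub_nonneg.2 (S.mono hab))]

/-- Fubini on `{(t, s) | a < s ≤ t ≤ b}`, using `S t - S a = S.measure (Ioc a t)`. -/
theorem intervalIntegral_smul_eq (hab : a ≤ b) (hf : IntervalIntegrable f volume a b) :
    ∫ t in a..b, S t • f t =
      S a • (∫ t in a..b, f t) + ∫ s in Ioc a b, (∫ t in s..b, f t) ∂S.measure := by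
  set G : ℝ → ℝ → E := fun t s => (Iic t).indicator (fun _ => f t) s
  have hG : Integrable (Function.uncurry G)
      ((volume.restrict (Ioc a b)).prod (S.measure.restrict (Ioc a b))) := by
    have : Function.uncurry G = {p : ℝ × ℝ | p.2 ≤ p.1}.indicator (fun p => f p.1) := by
      ext ⟨t, s⟩; simp [G, indicator]
    rw [this]
    exact (hf.1.comp_fst _).indicator (measurableSet_le measurable_snd measurable_fst)
  have hG_ds : ∀ t ∈ Ioc a b, ∫ s in Ioc a b, G t s ∂S.measure = (S t - S a) • f t := by
    intro t ht
    rw [integral_indicator_const _ measurableSet_Iic, measureReal_restrict_apply measurableSet_Iic,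
      Iic_inter_Ioc_of_le ht.2, S.measureReal_Ioc ht.1.le]
  have hG_dt : ∀ s ∈ Ioc a b, ∫ t in Ioc a b, G t s = ∫ t in s..b, f t := by
    intro s hs
    have : (fun t => G t s) = (Ici s).indicator f := by
      ext t; simp [G, indicator]
    have hIcc : Ioc a b ∩ Ici s = Icc s b := by
      ext t; simp only [mem_inter_iff, mem_Ioc, mem_Ici, mem_Icc]; grind
    rw [this, setIntegral_indicator measurableSet_Ici, hIcc,
      integral_Icc_eq_integral_Ioc, ← integral_of_le hs.2]
  calc ∫ t in a..b, S t • f t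
      = ∫ t in Ioc a b, (S a • f t + ∫ s in Ioc a b, G t s ∂S.measure) := by
        rw [integral_of_le hab]
        refine setIntegral_congr_fun measurableSet_Ioc fun t ht => ?_
        rw [hG_ds t ht, sub_smul, add_sub_cancel]
    _ = S a • (∫ t in a..b, f t) + ∫ t in Ioc a b, ∫ s in Ioc a b, G t s ∂S.measure := by
        have hG_left : IntegrableOn (fun t => ∫ s in Ioc a b, G t s ∂S.measure) (Ioc a b) :=
          hG.integral_prod_left
        rw [integral_add (f := fun t => S a • f t) (hf.1.smul (S a)) hG_left,
          MeasureTheory.integral_smul, integral_of_le hab]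
    _ = S a • (∫ t in a..b, f t) + ∫ s in Ioc a b, (∫ t in s..b, f t) ∂S.measure := by
        rw [integral_integral_swap hG, setIntegral_congr_fun measurableSet_Ioc hG_dt]

theorem norm_intervalIntegral_smul_le (hab : a ≤ b) (hf : IntervalIntegrable f volume a b)
    {F : ℝ → E} {K : ℝ} (hFc : ContinuousOn F (Icc a b))
    (hF : ∀ t ∈ Ioo a b, HasDerivAt F (f t) t) (hK : ∀ t ∈ Icc a b, ‖F t‖ ≤ K) :
    ‖∫ t in a..b, S t • f t‖ ≤ K * (|S a| + |S b| + (S b - S a)) := by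
  have hprim : ∀ s ∈ Icc a b, ∫ t in s..b, f t = F b - F s := fun s hs =>
    integral_eq_sub_of_hasDerivAt_of_le hs.2 (hFc.mono (Icc_subset_Icc_left hs.1))
      (fun t ht => hF t ⟨hs.1.trans_lt ht.1, ht.2⟩)
      (hf.mono_set (by rw [uIcc_of_le hs.2, uIcc_of_le hab]; exact Icc_subset_Icc_left hs.1))
  have hFint : IntegrableOn F (Ioc a b) S.measure :=
    hFc.integrableOn_Icc.mono_set Ioc_subset_Icc_self
  have hint : ‖∫ s in Ioc a b, F s ∂S.measure‖ ≤ K * (S b - S a) := by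
    rw [← S.measureReal_Ioc hab]
    exact norm_setIntegral_le_of_norm_le_const (by simp [S.measure_Ioc])
      fun s hs => hK s (Ioc_subset_Icc_self hs)
  rw [S.intervalIntegral_smul_eq hab hf, hprim a (left_mem_Icc.2 hab),
    setIntegral_congr_fun measurableSet_Ioc fun s hs => hprim s (Ioc_subset_Icc_self hs),
    integral_sub (integrable_const _) hFint, setIntegral_const, S.measureReal_Ioc hab]
  calc ‖S a • (F b - F a) + ((S b - S a) • F b - ∫ s in Ioc a b, F s ∂S.measure)‖
      = ‖S b • F b - S a • F a - ∫ s in Ioc a b, F s ∂S.measure‖ := by congr 1; module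
    _ ≤ ‖S b • F b‖ + ‖S a • F a‖ + ‖∫ s in Ioc a b, F s ∂S.measure‖ :=
        norm_sub_le_of_le (norm_sub_le _ _) le_rfl
    _ ≤ |S b| * K + |S a| * K + K * (S b - S a) := by
        rw [norm_smul, norm_smul, Real.norm_eq_abs, Real.norm_eq_abs]
        gcongr
        exacts [hK b (right_mem_Icc.2 hab), hK a (left_mem_Icc.2 hab)]
    _ = K * (|S a| + |S b| + (S b - S a)) := by ring

end StieltjesFunction

section

variable {E : Type*} [NormedAddCommGroup E] [NormedSpace ℝ E] [CompleteSpace E]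
  {f F : ℝ → E} {h : ℝ → ℝ} {a b K : ℝ}

theorem norm_intervalIntegral_smul_le_of_monotoneOn (hab : a ≤ b) (hh : MonotoneOn h (Icc a b))
    (hhc : ContinuousOn h (Icc a b)) (hf : IntervalIntegrable f volume a b)
    (hFc : ContinuousOn F (Icc a b)) (hF : ∀ t ∈ Ioo a b, HasDerivAt F (f t) t)
    (hK : ∀ t ∈ Icc a b, ‖F t‖ ≤ K) :
    ‖∫ t in a..b, h t • f t‖ ≤ K * (|h a| + |h b| + (h b - h a)) := by
  let S : StieltjesFunction ℝ :=
    { toFun := IccExtend hab ((Icc a b).domRestrict h)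
      mono' := Monotone.IccExtend hab (monotoneOn_iff_monotone.1 hh)
      right_continuous' _ := (continuous_IccExtend_iff.2 hhc.domRestrict).continuousWithinAt }
  have hS : ∀ t ∈ Icc a b, S t = h t := fun t ht =>
    IccExtend_of_mem hab ((Icc a b).domRestrict h) ht
  have hSh : ∫ t in a..b, S t • f t = ∫ t in a..b, h t • f t :=
    integral_congr fun t ht => by rw [uIcc_of_le hab] at ht; simp only [hS t ht]
  simpa only [hSh, hS a (left_mem_Icc.2 hab), hS b (right_mem_Icc.2 hab)] using
    S.norm_intervalIntegral_smul_le hab hf hFc hF hK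

theorem norm_intervalIntegral_smul_le_of_monotoneOn_or_antitoneOn (hab : a ≤ b)
    (hh : MonotoneOn h (Icc a b) ∨ AntitoneOn h (Icc a b))
    (hhc : ContinuousOn h (Icc a b)) (hf : IntervalIntegrable f volume a b)
    (hFc : ContinuousOn F (Icc a b)) (hF : ∀ t ∈ Ioo a b, HasDerivAt F (f t) t)
    (hK : ∀ t ∈ Icc a b, ‖F t‖ ≤ K) :
    ‖∫ t in a..b, h t • f t‖ ≤ K * (|h a| + |h b| + |h b - h a|) := by
  have hK0 : 0 ≤ K := (norm_nonneg _).trans (hK a (left_mem_Icc.2 hab))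
  rcases hh with hh | hh
  · refine (norm_intervalIntegral_smul_le_of_monotoneOn hab hh hhc hf hFc hF hK).trans ?_
    gcongr
    exact le_abs_self _
  · have := norm_intervalIntegral_smul_le_of_monotoneOn hab hh.neg hhc.neg hf hFc hF hK
    simp only [neg_smul, intervalIntegral.integral_neg, norm_neg, abs_neg] at this
    refine this.trans ?_
    gcongr
    rw [abs_sub_comm]
    exact (le_abs_self _).trans_eq' (by ring)

end

lemma abs_add_abs_add_abs_sub_le {x y c : ℝ} (hx : 0 ≤ x) (hy : 0 ≤ y) (hxc : x ≤ c)
    (hyc : y ≤ c) : |x| + |y| + |y - x| ≤ 2 * c := by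
  rw [abs_of_nonneg hx, abs_of_nonneg hy, ← two_nsmul_sup_eq_add_add_abs_sub, two_nsmul, two_mul]
  gcongr <;> exact sup_le hxc hyc

lemma norm_e (θ : ℝ) : ‖e θ‖ = 1 := by
  simp [e, Complex.norm_exp]

lemma hasDerivAt_e (θ : ℝ) : HasDerivAt e (2 * π * Complex.I * e θ) θ :=
  ((Complex.ofRealCLM.hasDerivAt (x := θ)).const_mul (2 * π * Complex.I)).cexp.congr_deriv
    (by simp only [Complex.ofRealCLM_apply, Complex.ofReal_one, mul_one, e]; ring)

lemma e_neg (θ : ℝ) : e (-θ) = conj (e θ) := by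
  simp only [e, ← Complex.exp_conj, map_mul, Complex.conj_ofReal, Complex.conj_I, map_ofNat]
  push_cast; ring_nf

theorem norm_intervalIntegral_e_le_of_le_deriv {a b μ : ℝ} {g g' : ℝ → ℝ} (hab : a ≤ b)
    (hμ : 0 < μ) (hg : ∀ β ∈ Icc a b, HasDerivWithinAt g (g' β) (Icc a b) β)
    (hg'c : ContinuousOn g' (Icc a b))
    (hmono : MonotoneOn g' (Icc a b) ∨ AntitoneOn g' (Icc a b))
    (hμg' : ∀ β ∈ Icc a b, μ ≤ g' β) :
    ‖∫ β in a..b, e (g β)‖ ≤ 1 / (π * μ) := by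
  have hg'pos : ∀ β ∈ Icc a b, 0 < g' β := fun β hβ => hμ.trans_le (hμg' β hβ)
  set h : ℝ → ℝ := fun β => (g' β)⁻¹
  set f : ℝ → ℂ := fun β => g' β • (2 * π * Complex.I * e (g β))
  have hh : MonotoneOn h (Icc a b) ∨ AntitoneOn h (Icc a b) :=
    hmono.symm.imp (fun hm => antitoneOn_inv_pos.comp hm hg'pos)
      (fun hm => antitoneOn_inv_pos.comp_MonotoneOn hm hg'pos)
  have hegc : ContinuousOn (fun β => e (g β)) (Icc a b) := fun β hβ =>
    (hasDerivAt_e (g β)).continuousAt.comp_continuousWithinAt (hg β hβ).continuousWithinAt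
  have heg : ∀ β ∈ Ioo a b, HasDerivAt (fun β => e (g β)) (f β) β := fun β hβ =>
    (hasDerivAt_e (g β)).scomp β
      ((hg β (Ioo_subset_Icc_self hβ)).hasDerivAt (Icc_mem_nhds hβ.1 hβ.2))
  have hf : IntervalIntegrable f volume a b :=
    (hg'c.smul (continuousOn_const.mul hegc)).intervalIntegrable_of_Icc hab
  have hint : ∫ β in a..b, e (g β) = (2 * π * Complex.I)⁻¹ • ∫ β in a..b, h β • f β := by
    rw [← intervalIntegral.integral_smul]
    refine integral_congr fun β hβ => ?_
    rw [uIcc_of_le hab] at hβ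
    simp only [h, f, smul_smul, inv_mul_cancel₀ (hg'pos β hβ).ne', one_smul, smul_eq_mul]
    field_simp
  have hh0 : ∀ β ∈ Icc a b, 0 ≤ h β := fun β hβ => (inv_pos.2 (hg'pos β hβ)).le
  have hhμ : ∀ β ∈ Icc a b, h β ≤ μ⁻¹ := fun β hβ => inv_anti₀ hμ (hμg' β hβ)
  have hweight : |h a| + |h b| + |h b - h a| ≤ 2 * μ⁻¹ :=
    abs_add_abs_add_abs_sub_le (hh0 a (left_mem_Icc.2 hab)) (hh0 b (right_mem_Icc.2 hab))
      (hhμ a (left_mem_Icc.2 hab)) (hhμ b (right_mem_Icc.2 hab))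
  calc ‖∫ β in a..b, e (g β)‖ = (2 * π)⁻¹ * ‖∫ β in a..b, h β • f β‖ := by
        rw [hint, norm_smul, norm_inv]
        simp [abs_of_pos pi_pos]
    _ ≤ (2 * π)⁻¹ * (2 * μ⁻¹) := by
        gcongr
        refine (norm_intervalIntegral_smul_le_of_monotoneOn_or_antitoneOn hab hh
          (hg'c.inv₀ fun β hβ => (hg'pos β hβ).ne') hf hegc heg fun β _ => (norm_e _).le).trans
          ((one_mul _).trans_le hweight)
    _ = 1 / (π * μ) := by field_simp

theorem van_der_corput_first_derivative
    (a b : ℝ) (hab : a < b) (g g' : ℝ → ℝ) (μ : ℝ) (hμ : 0 < μ)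
    (hg : ∀ β ∈ Set.Icc a b, HasDerivWithinAt g (g' β) (Set.Icc a b) β)
    (hg'cont : ContinuousOn g' (Set.Icc a b))
    (hmono : MonotoneOn g' (Set.Icc a b) ∨ AntitoneOn g' (Set.Icc a b))
    (hbound : ∀ β ∈ Set.Icc a b, μ ≤ |g' β|) :
    ‖∫ β in a..b, e (g β)‖ ≤ 1 / (Real.pi * μ) := by
  have hg'ne : ∀ β ∈ Icc a b, g' β ≠ 0 := fun β hβ h0 => by
    simpa [h0] using hμ.trans_le (hbound β hβ)
  rcases isPreconnected_Icc.mapsTo_Ioi_or_Iio hg'cont hg'ne with hpos | hneg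
  · refine norm_intervalIntegral_e_le_of_le_deriv hab.le hμ hg hg'cont hmono fun β hβ => ?_
    simpa only [abs_of_pos (mem_Ioi.1 (hpos hβ))] using hbound β hβ
  · calc ‖∫ β in a..b, e (g β)‖ = ‖∫ β in a..b, e (-g β)‖ := by
          simp only [e_neg, intervalIntegral_conj, RCLike.norm_conj]
      _ ≤ 1 / (π * μ) := by
          refine norm_intervalIntegral_e_le_of_le_deriv hab.le hμ (fun β hβ => (hg β hβ).neg)
            hg'cont.neg (hmono.symm.imp AntitoneOn.neg MonotoneOn.neg) fun β hβ => ?_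
          simpa only [abs_of_neg (mem_Iio.1 (hneg hβ))] using hbound β hβ
end

section
/- Let j ∈ ℤ \ {0}, h ∈ ℤ, q ∈ ℕ, and let β_h ∈ [η, ξ] satisfy j f'(β_h) = h, where f is C² on [η, ξ] with 0 < c₁ ≤ |f''| ≤ c₂. Let λ_h = ‖j f(β_h) − h β_h‖ and suppose λ_h ≤ 1/4. Set c = c₂^{−1/2}. Then for every β ∈ [η, ξ] with |β − β_h| ≤ c√(λ_h/|j|), one has (1/2)λ_h ≤ ‖j f(β) − h β‖ ≤ (3/2)λ_h. -/
/-!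
Put `g(β) = j f(β) − hβ`. Since `g'(β_h) = 0` and `|g''| ≤ c₂ |j|`, Taylor's theorem with
Lagrange remainder gives `|g(β) − g(β_h)| ≤ (c₂ |j| / 2) (β − β_h)² ≤ λ_h / 2` on the given
neighbourhood, and the distance to the nearest integer is 1-Lipschitz.
-/

/-- Distance from a real number to the nearest integer. -/
noncomputable def distToInt (x : ℝ) : ℝ := |x - round x|

open Set

theorem distToInt_le_add_abs_sub (x y : ℝ) : distToInt x ≤ distToInt y + |x - y| :=
  calc distToInt x ≤ |x - round y| := round_le x (round y)
    _ = |(x - y) + (y - round y)| := by ring_nf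
    _ ≤ distToInt y + |x - y| := by rw [add_comm (distToInt y)]; exact abs_add_le _ _

theorem rpow_neg_half_sq {c : ℝ} (hc : 0 ≤ c) : (c ^ (-(1:ℝ)/2)) ^ 2 = c⁻¹ := by
  rw [← Real.rpow_natCast, ← Real.rpow_mul hc]
  norm_num [Real.rpow_neg_one]

theorem mul_mul_sq_le_of_abs_le {a c l r : ℝ} (ha : 0 ≤ a) (hc : 0 ≤ c) (hl : 0 ≤ l)
    (hr : |r| ≤ c ^ (-(1:ℝ)/2) * √(l / a)) : a * c * r ^ 2 ≤ l := by
  have hr2 : r ^ 2 ≤ c⁻¹ * (l / a) := by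
    calc r ^ 2 = |r| ^ 2 := (sq_abs r).symm
      _ ≤ (c ^ (-(1:ℝ)/2) * √(l / a)) ^ 2 := pow_le_pow_left₀ (abs_nonneg r) hr 2
      _ = c⁻¹ * (l / a) := by rw [mul_pow, rpow_neg_half_sq hc, Real.sq_sqrt (by positivity)]
  calc a * c * r ^ 2 ≤ a * c * (c⁻¹ * (l / a)) := by gcongr
    _ = (c * c⁻¹) * (a * a⁻¹) * l := by ring
    -- `x * x⁻¹ ≤ 1` holds for every `x ≥ 0`, including the junk value `0 * 0⁻¹ = 0`
    _ ≤ 1 * 1 * l := by gcongr <;> exact mul_inv_le_one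
    _ = l := by ring

theorem exists_sub_sub_mul_eq_of_hasDerivWithinAt {g g' g'' : ℝ → ℝ} {s : Set ℝ} {t x : ℝ}
    (hs : uIcc t x ⊆ s)
    (hg : ∀ y ∈ s, HasDerivWithinAt g (g' y) s y)
    (hg' : ∀ y ∈ s, HasDerivWithinAt g' (g'' y) s y) :
    ∃ y ∈ uIcc t x, g x - g t - g' t * (x - t) = g'' y * (x - t) ^ 2 / 2 := by
  rcases eq_or_ne t x with rfl | htx
  · exact ⟨t, left_mem_uIcc, by simp⟩
  set I := uIcc t x
  have hI : UniqueDiffOn ℝ I := uniqueDiffOn_Icc (by simpa using htx.symm)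
  have hd1 : ∀ y ∈ I, iteratedDerivWithin 1 g I y = g' y := fun y hy => by
    rw [iteratedDerivWithin_one]; exact ((hg y (hs hy)).mono hs).derivWithin (hI y hy)
  have hd2 : ∀ y ∈ I, iteratedDerivWithin 2 g I y = g'' y := fun y hy => by
    rw [iteratedDerivWithin_succ, derivWithin_congr hd1 (hd1 y hy)]
    exact ((hg' y (hs hy)).mono hs).derivWithin (hI y hy)
  have hcont : ContDiffOn ℝ 1 g I := by
    rw [show (1 : WithTop ℕ∞) = 0 + 1 from rfl, contDiffOn_succ_iff_derivWithin hI]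
    refine ⟨fun y hy => ((hg y (hs hy)).mono hs).differentiableWithinAt, by simp, ?_⟩
    rw [contDiffOn_zero]
    refine ContinuousOn.congr (fun y hy => ((hg' y (hs hy)).mono hs).continuousWithinAt) ?_
    exact fun y hy => by rw [← iteratedDerivWithin_one]; exact hd1 y hy
  have hdiff : DifferentiableOn ℝ (iteratedDerivWithin 1 g I) (uIoo t x) := fun y hy =>
    have hyI : y ∈ I := uIoo_subset_uIcc_self hy
    (((hg' y (hs hyI)).mono hs).differentiableWithinAt.congr hd1 (hd1 y hyI)).mono
      uIoo_subset_uIcc_self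
  obtain ⟨y, hy, hrem⟩ := taylor_mean_remainder_lagrange (n := 1) htx hcont hdiff
  have hyI : y ∈ I := uIoo_subset_uIcc_self hy
  have htaylor : taylorWithinEval g 1 I t x = g t + g' t * (x - t) := by
    simp [taylor_within_apply, hd1 t left_mem_uIcc]
    ring
  rw [htaylor, hd2 y hyI] at hrem
  exact ⟨y, hyI, by linarith⟩

theorem abs_sub_sub_mul_le_of_hasDerivWithinAt {g g' g'' : ℝ → ℝ} {s : Set ℝ} {t x C : ℝ}
    (hs : uIcc t x ⊆ s)
    (hg : ∀ y ∈ s, HasDerivWithinAt g (g' y) s y)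
    (hg' : ∀ y ∈ s, HasDerivWithinAt g' (g'' y) s y)
    (hC : ∀ y ∈ s, |g'' y| ≤ C) :
    |g x - g t - g' t * (x - t)| ≤ C / 2 * (x - t) ^ 2 := by
  obtain ⟨y, hy, heq⟩ := exists_sub_sub_mul_eq_of_hasDerivWithinAt hs hg hg'
  rw [heq, abs_div, abs_mul, abs_of_nonneg (sq_nonneg (x - t)), abs_two]
  nlinarith [hC y (hs hy), sq_nonneg (x - t)]

theorem distance_comparable_near_stationary_point_general
    (η ξ : ℝ) (f f' f'' : ℝ → ℝ) (c₂ : ℝ)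
    (hf : ∀ x ∈ Set.Icc η ξ, HasDerivWithinAt f (f' x) (Set.Icc η ξ) x)
    (hf' : ∀ x ∈ Set.Icc η ξ, HasDerivWithinAt f' (f'' x) (Set.Icc η ξ) x)
    (hup : ∀ x ∈ Set.Icc η ξ, |f'' x| ≤ c₂)
    (j : ℤ) (h : ℤ)
    (β_h : ℝ) (hβ_h : β_h ∈ Set.Icc η ξ) (hstat : (j : ℝ) * f' β_h = h)
    (lam : ℝ) (hlam : lam = distToInt ((j : ℝ) * f β_h - h * β_h)) :
    ∀ β ∈ Set.Icc η ξ, |β - β_h| ≤ c₂ ^ (-(1:ℝ)/2) * Real.sqrt (lam / |(j : ℝ)|) →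
      (1/2) * lam ≤ distToInt ((j : ℝ) * f β - h * β) ∧
        distToInt ((j : ℝ) * f β - h * β) ≤ (3/2) * lam := by
  intro β hβ hclose
  set g : ℝ → ℝ := fun x => (j : ℝ) * f x - h * x
  have hg : ∀ x ∈ Icc η ξ, HasDerivWithinAt g ((j : ℝ) * f' x - h) (Icc η ξ) x := fun x hx => by
    simpa using ((hf x hx).const_mul (j : ℝ)).fun_sub ((hasDerivWithinAt_id x _).const_mul (h : ℝ))
  have hg' : ∀ x ∈ Icc η ξ, HasDerivWithinAt (fun x => (j : ℝ) * f' x - h) ((j : ℝ) * f'' x)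
      (Icc η ξ) x := fun x hx => ((hf' x hx).const_mul (j : ℝ)).sub_const (h : ℝ)
  have hg'' : ∀ x ∈ Icc η ξ, |(j : ℝ) * f'' x| ≤ |(j : ℝ)| * c₂ := fun x hx => by
    rw [abs_mul]; gcongr; exact hup x hx
  have hlam0 : 0 ≤ lam := hlam ▸ abs_nonneg _
  have hc₂ : 0 ≤ c₂ := (abs_nonneg _).trans (hup β_h hβ_h)
  have hradius : |(j : ℝ)| * c₂ * (β - β_h) ^ 2 ≤ lam :=
    mul_mul_sq_le_of_abs_le (abs_nonneg _) hc₂ hlam0 hclose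
  have hnear : |g β - g β_h| ≤ lam / 2 := by
    have := abs_sub_sub_mul_le_of_hasDerivWithinAt (uIcc_subset_Icc hβ_h hβ) hg hg' hg''
    rw [hstat, sub_self, zero_mul, sub_zero] at this
    linarith
  have hlower := distToInt_le_add_abs_sub (g β_h) (g β)
  have hupper := distToInt_le_add_abs_sub (g β) (g β_h)
  rw [← hlam, abs_sub_comm] at hlower
  rw [← hlam] at hupper
  constructor <;> linarith

theorem distance_comparable_near_stationary_point
    (η ξ : ℝ) (hηξ : η < ξ) (f f' f'' : ℝ → ℝ) (c₁ c₂ : ℝ)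
    (hc₁ : 0 < c₁) (hc₁c₂ : c₁ ≤ c₂)
    (hf : ∀ x ∈ Set.Icc η ξ, HasDerivWithinAt f (f' x) (Set.Icc η ξ) x)
    (hf' : ∀ x ∈ Set.Icc η ξ, HasDerivWithinAt f' (f'' x) (Set.Icc η ξ) x)
    (hlow : ∀ x ∈ Set.Icc η ξ, c₁ ≤ |f'' x|)
    (hup : ∀ x ∈ Set.Icc η ξ, |f'' x| ≤ c₂)
    (j : ℤ) (hj : j ≠ 0) (h : ℤ) (q : ℕ)
    (β_h : ℝ) (hβ_h : β_h ∈ Set.Icc η ξ) (hstat : (j : ℝ) * f' β_h = h)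
    (lam : ℝ) (hlam : lam = distToInt ((j : ℝ) * f β_h - h * β_h))
    (hlam4 : lam ≤ 1/4) :
    ∀ β ∈ Set.Icc η ξ, |β - β_h| ≤ c₂ ^ (-(1:ℝ)/2) * Real.sqrt (lam / |(j : ℝ)|) →
      (1/2) * lam ≤ distToInt ((j : ℝ) * f β - h * β) ∧
        distToInt ((j : ℝ) * f β - h * β) ≤ (3/2) * lam :=
  distance_comparable_near_stationary_point_general η ξ f f' f'' c₂ hf hf' hup j h β_h hβ_h hstat
    lam hlam
end
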